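/- Let s and r be independent, identically distributed random variables, exponentially distributed with mean Ω > 0. Then E[1{r ≥ s}·log₂(1+r)] = (1/ln 2)·e^{1/Ω}·E₁(1/Ω) − (1/(2 ln 2))·e^{2/Ω}·E₁(2/Ω). (This is the maximal throughput τ_max of buffer-aided relaying with adaptive link selection for symmetric Rayleigh links, equation (21) of the paper.) -/

import Mathlib

open MeasureTheory ProbabilityTheory

/-- The exponential integral function `E₁(x) = ∫_x^∞ e^{-t}/t dt`. -/
noncomputable def expIntE1 (x : ℝ) : ℝ := ∫ t in Set.Ioi x, Real.exp (-t) / t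

/-- The law of an exponentially distributed random variable with mean `Ω`:
the measure on `ℝ` with density `(1/Ω) e^{-x/Ω}` on `[0,∞)` with respect to
Lebesgue measure. -/
noncomputable def expLaw (Ω : ℝ) : Measure ℝ :=
  (volume.restrict (Set.Ici (0 : ℝ))).withDensity
    (fun x => ENNReal.ofReal ((1 / Ω) * Real.exp (-x / Ω)))

/-! By independence, integrating out `s` first turns the expectation into the integral of
`F(y) log₂(1 + y)` against the law of `r`, where `F(y) = 1 - e^{-y/Ω}` is the distribution
function of `s`.
This is a difference of the two Laplace transforms `∫₀^∞ log(1 + y) e^{-a y} dy` at `a = 1/Ω`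
and `a = 2/Ω`. Integrating by parts, each equals `a⁻¹ ∫₀^∞ e^{-a y} / (1 + y) dy`, and the
substitution `t = a (1 + y)` identifies the last integral with `e^a E₁(a)`. -/

open Set Real Filter Topology

section WithDensity

variable {X E : Type*} [MeasurableSpace X] {μ : Measure X}
  [NormedAddCommGroup E] [NormedSpace ℝ E] {f : X → ℝ}

theorem integral_withDensity_ofReal (hf : Measurable f) (hf₀ : 0 ≤ᵐ[μ] f) (g : X → E) :
    ∫ x, g x ∂μ.withDensity (fun x => ENNReal.ofReal (f x)) = ∫ x, f x • g x ∂μ := by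
  rw [integral_withDensity_eq_integral_toReal_smul hf.ennreal_ofReal
    (ae_of_all _ fun _ => ENNReal.ofReal_lt_top)]
  refine integral_congr_ae ?_
  filter_upwards [hf₀] with x hx
  rw [ENNReal.toReal_ofReal hx]

theorem integrable_withDensity_ofReal_iff (hf : Measurable f) (hf₀ : 0 ≤ᵐ[μ] f) {g : X → E} :
    Integrable g (μ.withDensity fun x => ENNReal.ofReal (f x)) ↔
      Integrable (fun x => f x • g x) μ := by
  rw [integrable_withDensity_iff_integrable_smul' hf.ennreal_ofReal
    (ae_of_all _ fun _ => ENNReal.ofReal_lt_top)]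
  refine integrable_congr ?_
  filter_upwards [hf₀] with x hx
  rw [ENNReal.toReal_ofReal hx]

end WithDensity

theorem integral_comp_add_right_Ioi {E : Type*} [NormedAddCommGroup E] [NormedSpace ℝ E]
    (g : ℝ → E) (a c : ℝ) : ∫ x in Ioi a, g (x + c) = ∫ x in Ioi (a + c), g x := by
  rw [← integral_indicator measurableSet_Ioi, ← integral_indicator measurableSet_Ioi,
    ← integral_add_right_eq_self ((Ioi (a + c)).indicator g) c]
  congr 1
  ext x
  simp only [indicator_apply, mem_Ioi, add_lt_add_iff_right]

theorem integral_exp_neg_mul_div_one_add {a : ℝ} (ha : 0 < a) :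
    ∫ x in Ioi 0, exp (-(a * x)) / (1 + x) = exp a * expIntE1 a := by
  have hscale := integral_comp_mul_left_Ioi' (fun t => exp (-t) / t) 1 ha
  have hshift := integral_comp_add_right_Ioi (fun x => exp (-(a * x)) / (a * x)) 0 1
  simp only [smul_eq_mul, mul_one, zero_add] at hscale hshift
  rw [expIntE1, ← hscale, ← hshift, ← integral_const_mul, ← integral_const_mul]
  refine setIntegral_congr_fun measurableSet_Ioi fun x _ => ?_
  rw [show -(a * (x + 1)) = -a + -(a * x) by ring, exp_add, exp_neg a]
  field_simp
  ring

theorem log_one_add_le_self {x : ℝ} (hx : -1 < x) : log (1 + x) ≤ x := by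
  linarith [log_le_sub_one_of_pos (x := 1 + x) (by linarith)]

theorem integrableOn_log_one_add_mul_exp_neg_mul {a : ℝ} (ha : 0 < a) :
    IntegrableOn (fun x => log (1 + x) * exp (-(a * x))) (Ioi 0) := by
  have hdom : IntegrableOn (fun x : ℝ => x * exp (-(a * x))) (Ioi 0) := by
    simpa using integrableOn_rpow_mul_exp_neg_mul_rpow (s := 1) (by norm_num) zero_lt_one ha
  refine hdom.mono' (by fun_prop) ?_
  filter_upwards [ae_restrict_mem measurableSet_Ioi] with x (hx : 0 < x)
  rw [norm_mul, norm_of_nonneg (log_nonneg (by linarith)), norm_of_nonneg (exp_pos _).le]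
  exact mul_le_mul_of_nonneg_right (log_one_add_le_self (by linarith)) (exp_pos _).le

theorem integrableOn_exp_neg_mul_div_one_add {a : ℝ} (ha : 0 < a) :
    IntegrableOn (fun x => exp (-(a * x)) / (1 + x)) (Ioi 0) := by
  have hdom : IntegrableOn (fun x : ℝ => exp (-(a * x))) (Ioi 0) := by
    simpa using exp_neg_integrableOn_Ioi 0 ha
  refine hdom.mono' (Measurable.aestronglyMeasurable (by fun_prop)) ?_
  filter_upwards [ae_restrict_mem measurableSet_Ioi] with x (hx : 0 < x)
  rw [norm_of_nonneg (by positivity), div_le_iff₀ (by linarith)]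
  nlinarith [exp_pos (-(a * x))]

theorem tendsto_log_one_add_mul_exp_neg_mul_atTop {a : ℝ} (ha : 0 < a) :
    Tendsto (fun x => log (1 + x) * exp (-(a * x))) atTop (𝓝 0) := by
  have hdom : Tendsto (fun x : ℝ => x * exp (-(a * x))) atTop (𝓝 0) := by
    simpa using tendsto_rpow_mul_exp_neg_mul_atTop_nhds_zero 1 a ha
  refine squeeze_zero' ?_ ?_ hdom <;> filter_upwards [eventually_ge_atTop 0] with x hx
  · exact mul_nonneg (log_nonneg (by linarith)) (exp_pos _).le
  · exact mul_le_mul_of_nonneg_right (log_one_add_le_self (by linarith)) (exp_pos _).le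

theorem integral_log_one_add_mul_exp_neg_mul {a : ℝ} (ha : 0 < a) :
    ∫ x in Ioi 0, log (1 + x) * exp (-(a * x)) = a⁻¹ * exp a * expIntE1 a := by
  have hu : ∀ x ∈ Ioi (0 : ℝ), HasDerivAt (fun x => log (1 + x)) (1 + x)⁻¹ x := fun x hx => by
    simpa using ((hasDerivAt_id' x).const_add 1).log (by linarith [mem_Ioi.mp hx] : 0 < 1 + x).ne'
  have hv : ∀ x ∈ Ioi (0 : ℝ), HasDerivAt (fun x => -a⁻¹ * exp (-(a * x))) (exp (-(a * x))) x :=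
    fun x _ => by
      refine ((((hasDerivAt_id' x).const_mul a).fun_neg.exp).const_mul (-a⁻¹)).congr_deriv ?_
      field_simp
  have huv : Tendsto (fun x => log (1 + x) * (-a⁻¹ * exp (-(a * x)))) atTop (𝓝 0) := by
    simpa [mul_left_comm] using (tendsto_log_one_add_mul_exp_neg_mul_atTop ha).const_mul (-a⁻¹)
  have huv₀ : Tendsto (fun x => log (1 + x) * (-a⁻¹ * exp (-(a * x)))) (𝓝[>] 0) (𝓝 0) := by
    have : ContinuousAt (fun x => log (1 + x) * (-a⁻¹ * exp (-(a * x)))) 0 := by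
      fun_prop (disch := norm_num)
    simpa using tendsto_nhdsWithin_of_tendsto_nhds this.tendsto
  have hu'v : (fun x => (1 + x)⁻¹ * (-a⁻¹ * exp (-(a * x))))
      = fun x => -a⁻¹ * (exp (-(a * x)) / (1 + x)) := by
    ext x; ring
  have hu'v_int : IntegrableOn (fun x => (1 + x)⁻¹ * (-a⁻¹ * exp (-(a * x)))) (Ioi 0) := by
    rw [hu'v]; exact (integrableOn_exp_neg_mul_div_one_add ha).const_mul _
  rw [integral_Ioi_mul_deriv_eq_deriv_mul hu hv (integrableOn_log_one_add_mul_exp_neg_mul ha)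
    hu'v_int huv₀ huv, hu'v, integral_const_mul, integral_exp_neg_mul_div_one_add ha]
  ring

theorem expMeasure_eq_withDensity (r : ℝ) :
    expMeasure r =
      (volume.restrict (Ici 0)).withDensity fun x => ENNReal.ofReal (r * exp (-(r * x))) := by
  rw [expMeasure, gammaMeasure, ← withDensity_indicator measurableSet_Ici]
  congr 1
  ext x
  rw [show gammaPDF 1 r x = exponentialPDF r x from rfl, exponentialPDF_eq]
  by_cases hx : 0 ≤ x <;> simp [hx]

theorem expLaw_eq_expMeasure (Om : ℝ) : expLaw Om = expMeasure (1 / Om) := by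
  rw [expLaw, expMeasure_eq_withDensity]
  congr 1
  ext x
  ring_nf

section ExpMeasure

variable {E : Type*} [NormedAddCommGroup E] [NormedSpace ℝ E] {r : ℝ}

theorem integral_expMeasure (hr : 0 ≤ r) (g : ℝ → E) :
    ∫ x, g x ∂expMeasure r = ∫ x in Ioi 0, (r * exp (-(r * x))) • g x := by
  rw [expMeasure_eq_withDensity, integral_withDensity_ofReal (by fun_prop)
    (ae_of_all _ fun _ => by positivity), integral_Ici_eq_integral_Ioi]

theorem integrable_expMeasure_iff (hr : 0 ≤ r) {g : ℝ → E} :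
    Integrable g (expMeasure r) ↔ IntegrableOn (fun x => (r * exp (-(r * x))) • g x) (Ioi 0) := by
  rw [expMeasure_eq_withDensity, integrable_withDensity_ofReal_iff (by fun_prop)
    (ae_of_all _ fun _ => by positivity), ← IntegrableOn, integrableOn_Ici_iff_integrableOn_Ioi]

end ExpMeasure

theorem integrable_log_one_add_expMeasure {r : ℝ} (hr : 0 < r) :
    Integrable (fun x => log (1 + x)) (expMeasure r) := by
  rw [integrable_expMeasure_iff hr.le]
  refine IntegrableOn.congr_fun ((integrableOn_log_one_add_mul_exp_neg_mul hr).const_mul r)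
    (fun x _ => ?_) measurableSet_Ioi
  simp only [smul_eq_mul]
  ring

section Independence

theorem integrable_prod_ite_le {E : Type*} [NormedAddCommGroup E] {g : ℝ → E}
    {μ ν : Measure ℝ} [IsFiniteMeasure μ] [SFinite ν] (hg : Integrable g ν) :
    Integrable (fun p : ℝ × ℝ => if p.1 ≤ p.2 then g p.2 else 0) (μ.prod ν) :=
  (hg.comp_snd μ).indicator (measurableSet_le measurable_fst measurable_snd)

variable {E : Type*} [NormedAddCommGroup E] [NormedSpace ℝ E] [CompleteSpace E] {g : ℝ → E}

theorem integral_prod_ite_le {μ ν : Measure ℝ} [IsProbabilityMeasure μ] [SFinite ν]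
    (hg : Integrable g ν) :
    ∫ p : ℝ × ℝ, (if p.1 ≤ p.2 then g p.2 else 0) ∂(μ.prod ν) = ∫ y, cdf μ y • g y ∂ν := by
  rw [integral_prod_symm _ (integrable_prod_ite_le hg)]
  congr 1
  ext y
  rw [cdf_eq_real, ← integral_indicator_const _ measurableSet_Iic]
  rfl

theorem integral_ite_le_of_indepFun {Ω : Type*} [MeasurableSpace Ω] {P : Measure Ω}
    [IsProbabilityMeasure P] {X Y : Ω → ℝ} (hX : AEMeasurable X P) (hY : AEMeasurable Y P)
    (hXY : IndepFun X Y P) (hg : Integrable g (P.map Y)) :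
    ∫ ω, (if X ω ≤ Y ω then g (Y ω) else 0) ∂P = ∫ y, cdf (P.map X) y • g y ∂(P.map Y) := by
  have := Measure.isProbabilityMeasure_map (μ := P) hX
  have hmap := (indepFun_iff_map_prod_eq_prod_map_map hX hY).mp hXY
  rw [← integral_prod_ite_le hg, ← hmap,
    integral_map (hX.prodMk hY) (hmap ▸ (integrable_prod_ite_le hg).aestronglyMeasurable)]

end Independence

/-- For independent, identically exponentially distributed SNRs `s`, `r` with
mean `Ω > 0`, `E[1{r ≥ s} log₂(1+r)] = (1/ln 2) e^{1/Ω} E₁(1/Ω)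
− (1/(2 ln 2)) e^{2/Ω} E₁(2/Ω)`: the maximal throughput `τ_max` of
buffer-aided relaying with adaptive link selection for symmetric Rayleigh
links (equation (21) of the paper). -/
theorem symmetric_links_max_throughput
    {Ω : Type*} [MeasurableSpace Ω] (P : Measure Ω) [IsProbabilityMeasure P]
    (s r : Ω → ℝ) (hs : Measurable s) (hr : Measurable r)
    (Om : ℝ) (hOm : 0 < Om)
    (hlaws : P.map s = expLaw Om) (hlawr : P.map r = expLaw Om)
    (hindep : IndepFun s r P) :
    ∫ ω, (if s ω ≤ r ω then Real.logb 2 (1 + r ω) else 0) ∂P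
      = (1 / Real.log 2) * Real.exp (1 / Om) * expIntE1 (1 / Om)
        - (1 / (2 * Real.log 2)) * Real.exp (2 / Om) * expIntE1 (2 / Om) := by
  have ha : 0 < 1 / Om := by positivity
  have hlog : Integrable (fun y => logb 2 (1 + y)) (P.map r) := by
    rw [hlawr, expLaw_eq_expMeasure]
    exact (integrable_log_one_add_expMeasure ha).div_const _
  have hintegrand : ∀ y ∈ Ioi (0 : ℝ),
      (1 / Om * exp (-(1 / Om * y))) • (cdf (expMeasure (1 / Om)) y • logb 2 (1 + y))
        = 1 / (Om * log 2) *
          (log (1 + y) * exp (-(1 / Om * y)) - log (1 + y) * exp (-(2 / Om * y))) := by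
    intro y hy
    rw [cdf_expMeasure_eq ha, if_pos (le_of_lt hy), logb, smul_eq_mul, smul_eq_mul,
      show -(2 / Om * y) = -(1 / Om * y) + -(1 / Om * y) by ring, exp_add]
    field_simp
  rw [integral_ite_le_of_indepFun hs.aemeasurable hr.aemeasurable hindep hlog, hlaws, hlawr,
    expLaw_eq_expMeasure, integral_expMeasure ha.le,
    setIntegral_congr_fun measurableSet_Ioi hintegrand, integral_const_mul,
    integral_sub (integrableOn_log_one_add_mul_exp_neg_mul ha)
      (integrableOn_log_one_add_mul_exp_neg_mul (by positivity)),
    integral_log_one_add_mul_exp_neg_mul ha, integral_log_one_add_mul_exp_neg_mul (by positivity)]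
  field_simp
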